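/- arXiv:1103.4084 — 4 statements merged into one kernel-verified Lean document; each statement's English description precedes it below -/
import Mathlib

section
/- For every prime p and every integer i ≥ 0, the rational number (p^i)! · p^{-(p^i-1)/(p-1)} is an integer congruent to (-1)^i modulo p. -/
open Finset

private lemma fact_add_eq (n k : ℕ) :
    (n + k).factorial = n.factorial * ∏ j ∈ range k, (n + j + 1) := by
  induction k with
  | zero => simp
  | succ k ih =>
    rw [prod_range_succ, ← Nat.add_assoc, Nat.factorial_succ, ih]
    ring

private lemma aux (p : ℕ) (hp : p.Prime) (m : ℕ) :
    ∃ u : ℤ, ((p * m).factorial : ℤ) = (p : ℤ) ^ m * (m.factorial : ℤ) * u ∧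
      (u : ZMod p) = (-1) ^ m := by
  haveI : Fact p.Prime := ⟨hp⟩
  have h2 : 2 ≤ p := hp.two_le
  induction m with
  | zero => exact ⟨1, by simp, by simp⟩
  | succ m ih =>
    obtain ⟨u, hu, hu'⟩ := ih
    have key : (p * (m + 1)).factorial
        = (p * m).factorial * ∏ j ∈ range p, (p * m + j + 1) := by
      rw [Nat.mul_add, Nat.mul_one, fact_add_eq]
    have hlast : p * m + (p - 1) + 1 = p * (m + 1) := by
      rw [Nat.mul_add, Nat.mul_one]; omega
    have split : (∏ j ∈ range p, ((p * m + j + 1 : ℕ) : ℤ))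
        = (∏ j ∈ range (p - 1), ((p * m + j + 1 : ℕ) : ℤ)) * ((p * (m + 1) : ℕ) : ℤ) := by
      rw [show range p = range (p - 1 + 1) from by congr 1; omega, prod_range_succ, hlast]
    refine ⟨u * ∏ j ∈ range (p - 1), ((p * m + j + 1 : ℕ) : ℤ), ?_, ?_⟩
    · have hk : ((p * (m + 1)).factorial : ℤ)
          = ((p * m).factorial : ℤ) * ∏ j ∈ range p, ((p * m + j + 1 : ℕ) : ℤ) := by
        rw [key]; push_cast; ring
      rw [hk, split, hu, Nat.factorial_succ]
      push_cast
      ring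
    · push_cast
      rw [hu']
      have hQ : (∏ x ∈ range (p - 1), ((p : ZMod p) * (m : ZMod p) + (x : ZMod p) + 1))
          = ((p - 1).factorial : ZMod p) := by
        rw [← prod_range_add_one_eq_factorial]
        push_cast
        refine Finset.prod_congr rfl fun j _ => ?_
        simp [ZMod.natCast_self]
      rw [hQ, ZMod.wilsons_lemma, pow_succ]

/-- `(p^i)! ⬝ p^{-(p^i-1)/(p-1)}` is an integer congruent to `(-1)^i` modulo `p`. -/
theorem stmt_5 (p : ℕ) (hp : p.Prime) (i : ℕ) :
    ∃ m : ℤ, ((p ^ i).factorial : ℤ) = (p : ℤ) ^ ((p ^ i - 1) / (p - 1)) * m ∧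
      (m : ZMod p) = (-1) ^ i := by
  induction i with
  | zero => exact ⟨1, by simp, by simp⟩
  | succ i ih =>
    obtain ⟨m, hm, hm'⟩ := ih
    obtain ⟨u, hu, hu'⟩ := aux p hp (p ^ i)
    have h2 : 2 ≤ p := hp.two_le
    have hdvd : (p - 1) ∣ (p ^ i - 1) := by
      simpa using Nat.sub_dvd_pow_sub_pow p 1 i
    have h1 : 1 ≤ p ^ i := Nat.one_le_pow _ _ (by omega)
    have hple : p ^ i ≤ p ^ i * p := Nat.le_mul_of_pos_right _ (by omega)
    have hmul : (p - 1) * p ^ i = p ^ i * p - p ^ i := by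
      rw [Nat.sub_mul, Nat.one_mul, Nat.mul_comm]
    have hexp : (p ^ (i + 1) - 1) / (p - 1) = (p ^ i - 1) / (p - 1) + p ^ i := by
      have hstep : p ^ (i + 1) - 1 = (p ^ i - 1) + (p - 1) * p ^ i := by
        rw [pow_succ]
        omega
      rw [hstep, Nat.add_mul_div_left _ _ (by omega : 0 < p - 1)]
    refine ⟨m * u, ?_, ?_⟩
    · rw [hexp, show (p : ℕ) ^ (i + 1) = p * p ^ i from by ring, hu, hm]
      ring
    · push_cast
      rw [hm', hu', pow_succ]
      have hneg : ((-1 : ZMod p)) ^ (p ^ i) = -1 := by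
        rcases hp.eq_two_or_odd' with h | h
        · subst h
          have : (-1 : ZMod 2) = 1 := by decide
          rw [this]; simp
        · exact (h.pow).neg_one_pow
      rw [hneg]
end

section
/- Let p be a prime. For any integer j ≥ 1 with j(p-1)+1 = p^m a power of p, the rational number p^j/(j(p-1)+1)! is a p-adic unit congruent to (-1)^m modulo p. -/
open Nat Finset

private lemma asc_cast (p n : ℕ) : ∀ k : ℕ,
    ((p * n + 1).ascFactorial k : ZMod p) = (k.factorial : ZMod p)
  | 0 => by simp
  | k + 1 => by
    rw [Nat.ascFactorial_succ, Nat.factorial_succ]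
    push_cast
    rw [asc_cast p n k]
    have : ((p : ZMod p)) = 0 := by
      simpa using (ZMod.natCast_self p)
    ring_nf
    rw [this]
    ring

private lemma key (p : ℕ) (hp : p.Prime) : ∀ n : ℕ,
    ∃ w : ℕ, (p * n).factorial = p ^ n * n.factorial * w ∧ (w : ZMod p) = (-1) ^ n := by
  haveI : Fact p.Prime := ⟨hp⟩
  intro n
  induction n with
  | zero => exact ⟨1, by simp, by simp⟩
  | succ n ih =>
    obtain ⟨w, hw, hwc⟩ := ih
    refine ⟨w * (p * n + 1).ascFactorial (p - 1), ?_, ?_⟩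
    · have hA : (p * n).factorial * (p * n + 1).ascFactorial (p - 1) = (p * n + (p - 1)).factorial :=
        Nat.factorial_mul_ascFactorial _ _
      have hB : (p * (n + 1)).factorial = (p * (n + 1)) * (p * n + (p - 1)).factorial := by
        have h1 : p * (n + 1) = (p * n + (p - 1)) + 1 := by
          have := hp.pos
          rw [Nat.mul_succ]
          omega
        rw [h1, Nat.factorial_succ]
      rw [hB, ← hA, hw, Nat.factorial_succ]
      ring
    · push_cast
      rw [hwc, asc_cast]
      have hwil : ((p - 1).factorial : ZMod p) = -1 := ZMod.wilsons_lemma p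
      rw [hwil, pow_succ]

private lemma keypow (p : ℕ) (hp : p.Prime) : ∀ m : ℕ,
    ∃ w : ℕ, (p ^ m).factorial = p ^ (∑ i ∈ Finset.range m, p ^ i) * w ∧
      (w : ZMod p) = (-1) ^ m := by
  haveI : Fact p.Prime := ⟨hp⟩
  intro m
  induction m with
  | zero => exact ⟨1, by simp, by simp⟩
  | succ m ih =>
    obtain ⟨w, hw, hwc⟩ := ih
    obtain ⟨v, hv, hvc⟩ := key p hp (p ^ m)
    refine ⟨w * v, ?_, ?_⟩
    · rw [show p ^ (m + 1) = p * p ^ m from (pow_succ' p m), hv, hw,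
        Finset.sum_range_succ, pow_add]
      ring
    · push_cast
      rw [hwc, hvc]
      have hneg : ((-1 : ZMod p)) ^ (p ^ m) = -1 := by
        rcases hp.eq_two_or_odd' with h2 | hodd
        · subst h2
          have h1 : (-1 : ZMod 2) = 1 := rfl
          rw [h1, one_pow]
        · exact (hodd.pow).neg_one_pow
      rw [hneg, pow_succ]

/-- For `j ≥ 1` with `j(p-1)+1 = p^m`, the rational number `p^j/(j(p-1)+1)!` is a `p`-adic
unit congruent to `(-1)^m` modulo `p`: writing `(p^m)! = p^j · u` with `p ∤ u`, the residue
of `p^j/(p^m)! = u⁻¹` modulo `p` is `(-1)^m`. -/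
theorem stmt_8 (p j m : ℕ) (hp : p.Prime) (hj : 0 < j) (hm : j * (p - 1) + 1 = p ^ m) :
    ∃ u : ℤ, ((p ^ m).factorial : ℤ) = (p : ℤ) ^ j * u ∧ ¬ ((p : ℤ) ∣ u) ∧
      ((u : ZMod p))⁻¹ = (-1) ^ m := by
  haveI : Fact p.Prime := ⟨hp⟩
  obtain ⟨w, hw, hwc⟩ := keypow p hp m
  have hje : j = ∑ i ∈ Finset.range m, p ^ i := by
    have h2 : 2 ≤ p := hp.two_le
    have hg : (∑ i ∈ Finset.range m, (p : ℤ) ^ i) * ((p : ℤ) - 1) = (p : ℤ) ^ m - 1 :=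
      geom_sum_mul _ _
    have hj' : (j : ℤ) * ((p : ℤ) - 1) = (p : ℤ) ^ m - 1 := by
      have h := congrArg (Nat.cast : ℕ → ℤ) hm
      push_cast [Nat.cast_sub hp.one_le] at h
      linarith
    have hcancel : (j : ℤ) = ∑ i ∈ Finset.range m, (p : ℤ) ^ i := by
      have hne : ((p : ℤ) - 1) ≠ 0 := by
        have : (2 : ℤ) ≤ (p : ℤ) := by exact_mod_cast h2
        linarith
      exact mul_right_cancel₀ hne (by rw [hj', hg])
    exact_mod_cast hcancel
  refine ⟨(w : ℤ), ?_, ?_, ?_⟩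
  · rw [hje]; exact_mod_cast hw
  · intro hdvd
    have h0 : (w : ZMod p) = 0 := by
      exact_mod_cast (ZMod.intCast_zmod_eq_zero_iff_dvd (w : ℤ) p).mpr (by exact_mod_cast hdvd)
    rw [hwc] at h0
    exact pow_ne_zero m (by simp : (-1 : ZMod p) ≠ 0) h0
  · push_cast
    rw [hwc]
    rw [← inv_pow, inv_neg_one]
end

section
/- Let A be a commutative ring, M an A-module, p a prime, i ≥ 0, and suppose given a_u ∈ A ⊗ Q and m_u ∈ M ⊗ Q for u = 0,…,i(p-1) with v_p(a_u) ≥ -⌊u/(p-1)⌋ and v_p(m_u) ≥ -⌊u/(p-1)⌋. Then each term p^i·a_u·m_{i(p-1)-u} lies in the image of M ⊗ Z_(p), and in (image of M ⊗ Z_(p) in M ⊗ Q) ⊗ Z/p one has Σ_{u=0}^{i(p-1)} p^i·a_u·m_{i(p-1)-u} = Σ_{j=0}^{i} (p^j·a_{j(p-1)}) · (p^{i-j}·m_{(i-j)(p-1)}). -/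
open TensorProduct Pointwise

/-!
Write `k(u) = ⌊u/(p-1)⌋` and `N = i(p-1)`. Since `k(u) + k(N-u) ≤ ⌊N/(p-1)⌋ = i`, the term
`p^i·a_u·m_{N-u}` is `p^{i-k(u)-k(N-u)}` times the product of the integral elements
`p^{k(u)}·a_u` and `p^{k(N-u)}·m_{N-u}`, and the images of the `ℤ_(p)`-forms are closed under
multiplication because a product of denominators prime to `p` is prime to `p`. The inequality is
strict unless `p-1 ∣ u`, so modulo `p` only the terms with `u = j(p-1)` survive, and these are
exactly the terms of the right-hand side.
-/

/-- `N_{ℤ_(p)⊂ℚ}`: the image of `N ⊗ ℤ_(p) → N ⊗ ℚ`, generated by the elements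
`(1/m) ⊗ x` with `m` prime to `p`. -/
noncomputable def imZp (p : ℕ) (N : Type*) [AddCommGroup N] : Submodule ℤ (ℚ ⊗[ℤ] N) :=
  Submodule.span ℤ {y | ∃ (x : N) (m : ℤ), ¬ ((p : ℤ) ∣ m) ∧ y = ((m : ℚ))⁻¹ ⊗ₜ[ℤ] x}

/-- The `ℤ`-bilinear multiplication `(A ⊗ ℚ) × (M ⊗ ℚ) → M ⊗ ℚ`,
`(q ⊗ a)·(r ⊗ m) = qr ⊗ (a • m)`, for `M` a module over a commutative ring `A`. -/
noncomputable def mulQ (A M : Type*) [CommRing A] [AddCommGroup M] [Module A M] :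
    (ℚ ⊗[ℤ] A) →ₗ[ℤ] (ℚ ⊗[ℤ] M) →ₗ[ℤ] (ℚ ⊗[ℤ] M) :=
  TensorProduct.lift <| LinearMap.mk₂ ℤ
    (fun q a => TensorProduct.map ((LinearMap.mul ℤ ℚ) q)
      ((LinearMap.mk₂ ℤ (fun (a : A) (m : M) => a • m)
        (fun _ _ _ => add_smul _ _ _) (fun _ _ _ => smul_assoc _ _ _)
        (fun _ _ _ => smul_add _ _ _) (fun c a m => smul_comm a c m)) a))
    (by intro q₁ q₂ a
        simp only [map_add, TensorProduct.map_add_left] <;> rfl)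
    (by intro c q a
        simp only [map_smul, TensorProduct.map_smul_left] <;> rfl)
    (by intro q a₁ a₂
        simp only [map_add, TensorProduct.map_add_right] <;> rfl)
    (by intro c q a
        simp only [map_smul, TensorProduct.map_smul_right] <;> rfl)


namespace Nat

theorem div_add_div_sub_le {q n u : ℕ} (hu : u ≤ n * q) : u / q + (n * q - u) / q ≤ n :=
  calc u / q + (n * q - u) / q ≤ (u + (n * q - u)) / q := div_add_div_le_add_div
    _ = n * q / q := by rw [Nat.add_sub_cancel' hu]
    _ ≤ n := Nat.div_le_of_le_mul (Nat.mul_comm n q).le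

theorem div_add_div_sub_lt {q n u : ℕ} (hq : 0 < q) (hu : u ≤ n * q) (hdvd : ¬q ∣ u) :
    u / q + (n * q - u) / q < n := by
  suffices u / q + (n * q - u) / q + 1 = n by omega
  have hsum : u + (n * q - u) = n * q := Nat.add_sub_cancel' hu
  rw [← add_div_eq_of_le_mod_add_mod _ hq, hsum, Nat.mul_div_cancel _ hq]
  exact le_mod_add_mod_of_dvd_add_of_not_dvd (by rw [hsum]; exact dvd_mul_left q n) hdvd

end Nat

theorem Finset.sum_range_filter_dvd {β : Type*} [AddCommMonoid β] (f : ℕ → β) {q : ℕ} (hq : 0 < q)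
    (n : ℕ) : ∑ u ∈ (range (n * q + 1)).filter (q ∣ ·), f u = ∑ j ∈ range (n + 1), f (j * q) := by
  rw [← sum_image fun j _ k _ h => Nat.eq_of_mul_eq_mul_right hq h]
  congr 1
  ext u
  simp only [mem_filter, mem_range, mem_image]
  constructor
  · rintro ⟨hu, c, rfl⟩
    refine ⟨c, ?_, Nat.mul_comm c q⟩
    nlinarith
  · rintro ⟨j, hj, rfl⟩
    exact ⟨by nlinarith, dvd_mul_left q j⟩

theorem natCast_pow_smul_mem {V : Type*} [AddCommGroup V] [Module ℚ V] {S : Submodule ℤ V} {v : V}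
    (hv : v ∈ S) (c n : ℕ) : ((c : ℚ) ^ n) • v ∈ S := by
  rw [← Nat.cast_pow, Nat.cast_smul_eq_nsmul]
  exact nsmul_mem hv _

section mulQ

variable {A M : Type*} [CommRing A] [AddCommGroup M] [Module A M]

theorem mulQ_tmul_tmul (q r : ℚ) (a : A) (x : M) :
    mulQ A M (q ⊗ₜ a) (r ⊗ₜ x) = (q * r) ⊗ₜ (a • x) := rfl

theorem mulQ_smul_smul (r s : ℚ) (x : ℚ ⊗[ℤ] A) (y : ℚ ⊗[ℤ] M) :
    mulQ A M (r • x) (s • y) = (r * s) • mulQ A M x y := by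
  rw [map_rat_smul, map_rat_smul (mulQ A M) r x, LinearMap.smul_apply, smul_smul, mul_comm]

theorem mulQ_mem_imZp {p : ℕ} (hp : p.Prime) {x : ℚ ⊗[ℤ] A} {y : ℚ ⊗[ℤ] M}
    (hx : x ∈ imZp p A) (hy : y ∈ imZp p M) : mulQ A M x y ∈ imZp p M := by
  have hxy := Submodule.apply_mem_map₂ (mulQ A M) hx hy
  rw [imZp, imZp, Submodule.map₂_span_span] at hxy
  refine Submodule.span_le.mpr ?_ hxy
  rintro _ ⟨_, ⟨a, n, hn, rfl⟩, _, ⟨b, k, hk, rfl⟩, rfl⟩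
  refine Submodule.subset_span ⟨a • b, n * k, ?_, ?_⟩
  · exact fun h => ((Nat.prime_iff_prime_int.mp hp).dvd_mul.mp h).elim hn hk
  · dsimp only
    rw [mulQ_tmul_tmul, Int.cast_mul, mul_inv]

theorem pow_smul_mulQ_mem_imZp {p : ℕ} (hp : p.Prime) {k l n : ℕ} (hkl : k + l ≤ n)
    {x : ℚ ⊗[ℤ] A} {y : ℚ ⊗[ℤ] M} (hx : (p : ℚ) ^ k • x ∈ imZp p A)
    (hy : (p : ℚ) ^ l • y ∈ imZp p M) : (p : ℚ) ^ n • mulQ A M x y ∈ imZp p M := by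
  have hsplit : (p : ℚ) ^ n • mulQ A M x y
      = (p : ℚ) ^ (n - (k + l)) • mulQ A M ((p : ℚ) ^ k • x) ((p : ℚ) ^ l • y) := by
    rw [mulQ_smul_smul, smul_smul, ← pow_add, ← pow_add, Nat.sub_add_cancel hkl]
  rw [hsplit]
  exact natCast_pow_smul_mem (mulQ_mem_imZp hp hx hy) p _

theorem pow_smul_mulQ_mem_smul_imZp {p : ℕ} (hp : p.Prime) {k l n : ℕ} (hkl : k + l < n)
    {x : ℚ ⊗[ℤ] A} {y : ℚ ⊗[ℤ] M} (hx : (p : ℚ) ^ k • x ∈ imZp p A)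
    (hy : (p : ℚ) ^ l • y ∈ imZp p M) : (p : ℚ) ^ n • mulQ A M x y ∈ (p : ℤ) • imZp p M := by
  obtain ⟨n, rfl⟩ := Nat.exists_eq_add_of_lt hkl
  rw [pow_succ', mul_smul, Nat.cast_smul_eq_nsmul, ← natCast_zsmul]
  exact Submodule.smul_mem_pointwise_smul _ _ _
    (pow_smul_mulQ_mem_imZp hp (Nat.le_add_right _ _) hx hy)

end mulQ

/-- Given `a_u ∈ A ⊗ ℚ`, `m_u ∈ M ⊗ ℚ` for `0 ≤ u ≤ i(p-1)` with
`v_p(a_u) ≥ -⌊u/(p-1)⌋` and `v_p(m_u) ≥ -⌊u/(p-1)⌋` (i.e. `p^{⌊u/(p-1)⌋}` times the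
element lies in the image of the `ℤ_(p)`-form), each term `p^i·a_u·m_{i(p-1)-u}` lies in
`M_{ℤ_(p)⊂ℚ}`, and in `M_{ℤ_(p)⊂ℚ} ⊗ ℤ/p` (i.e. modulo `p·M_{ℤ_(p)⊂ℚ}`) one has
`∑_{u=0}^{i(p-1)} p^i·a_u·m_{i(p-1)-u} = ∑_{j=0}^{i} (p^j·a_{j(p-1)})·(p^{i-j}·m_{(i-j)(p-1)})`. -/
theorem stmt_15 (p : ℕ) (hp : p.Prime) (i : ℕ)
    (A M : Type*) [CommRing A] [AddCommGroup M] [Module A M]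
    (a : ℕ → ℚ ⊗[ℤ] A) (m : ℕ → ℚ ⊗[ℤ] M)
    (ha : ∀ u ≤ i * (p - 1), ((p : ℚ) ^ (u / (p - 1))) • a u ∈ imZp p A)
    (hm : ∀ u ≤ i * (p - 1), ((p : ℚ) ^ (u / (p - 1))) • m u ∈ imZp p M) :
    (∀ u ≤ i * (p - 1),
        ((p : ℚ) ^ i) • mulQ A M (a u) (m (i * (p - 1) - u)) ∈ imZp p M) ∧
      (∑ u ∈ Finset.range (i * (p - 1) + 1),
          ((p : ℚ) ^ i) • mulQ A M (a u) (m (i * (p - 1) - u)))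
        - (∑ j ∈ Finset.range (i + 1),
            mulQ A M (((p : ℚ) ^ j) • a (j * (p - 1))) (((p : ℚ) ^ (i - j)) • m ((i - j) * (p - 1))))
        ∈ (p : ℤ) • imZp p M := by
  have hq : 0 < p - 1 := Nat.sub_pos_of_lt hp.one_lt
  refine ⟨fun u hu => pow_smul_mulQ_mem_imZp hp (Nat.div_add_div_sub_le hu) (ha u hu)
    (hm _ (Nat.sub_le _ _)), ?_⟩
  have hdiagonal : ∀ j ∈ Finset.range (i + 1),
      (p : ℚ) ^ i • mulQ A M (a (j * (p - 1))) (m (i * (p - 1) - j * (p - 1)))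
        = mulQ A M ((p : ℚ) ^ j • a (j * (p - 1))) ((p : ℚ) ^ (i - j) • m ((i - j) * (p - 1))) := by
    intro j hj
    rw [mulQ_smul_smul, ← pow_add, Nat.add_sub_cancel' (Finset.mem_range_succ_iff.mp hj),
      Nat.sub_mul]
  rw [← Finset.sum_filter_add_sum_filter_not _ (p - 1 ∣ ·), Finset.sum_range_filter_dvd _ hq,
    Finset.sum_congr rfl hdiagonal, add_sub_cancel_left]
  refine Submodule.sum_mem _ fun u hu => ?_
  obtain ⟨hu, hdvd⟩ := Finset.mem_filter.mp hu
  have hu : u ≤ i * (p - 1) := Finset.mem_range_succ_iff.mp hu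
  exact pow_smul_mulQ_mem_smul_imZp hp (Nat.div_add_div_sub_lt hq hu hdvd) (ha u hu)
    (hm _ (Nat.sub_le _ _))
end

section
/- For a prime p, let R(x) = Σ_{i≥0} (-1)^i x^{p^i - 1} and W(x) = 1 + x^{p-1}, viewed as formal power series over Z/p. Then x·R(x) is a left inverse of x·W(x) under composition of formal power series, i.e. (x·R(x)) ∘ (x·W(x)) = x in (Z/p)[[x]]. -/
open PowerSeries

/-- Composition `g ∘ f` of formal power series, meaningful when `f` has zero constant
term: the `k`-th coefficient only depends on `∑_{n ≤ k} g_n f^n` since `f^n` then has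
order at least `n`. -/
noncomputable def psComp {R : Type*} [CommRing R] (g f : PowerSeries R) : PowerSeries R :=
  PowerSeries.mk fun k =>
    PowerSeries.coeff (R := R) k (∑ n ∈ Finset.range (k + 1), PowerSeries.C (R := R) (PowerSeries.coeff (R := R) n g) * f ^ n)

/-- The series `R(x) = ∑_{i ≥ 0} (-1)^i x^{p^i - 1}` over `ℤ/p`: the coefficient of `x^n`
is `(-1)^i` if `n + 1 = p^i`, and `0` otherwise. -/
noncomputable def Rseries (p : ℕ) : PowerSeries (ZMod p) := by
  classical exact
  PowerSeries.mk fun n => if h : ∃ i : ℕ, n + 1 = p ^ i then (-1) ^ h.choose else 0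

/-- The series `W(x) = 1 + x^{p-1}` over `ℤ/p`. -/
noncomputable def Wseries (p : ℕ) : PowerSeries (ZMod p) :=
  1 + (PowerSeries.X : PowerSeries (ZMod p)) ^ (p - 1)


/-! In characteristic `p`, `(x + x^p)^(p^i) = x^(p^i) + x^(p^(i+1))`, so substituting
`x + x^p` into `x·R(x) = ∑ (-1)^i x^(p^i)` gives a telescoping sum: its truncation at the
`m`-th power of `p` is `x - (-1)^m x^(p^m)`, which agrees with `x` in every coefficient below
`p^m`. -/

lemma self_add_pow_expChar_pow_expChar_pow {R : Type*} [CommSemiring R] (p : ℕ) [ExpChar R p]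
    (x : R) (i : ℕ) : (x + x ^ p) ^ p ^ i = x ^ p ^ i + x ^ p ^ (i + 1) := by
  rw [add_pow_expChar_pow, ← pow_mul, ← pow_succ']

lemma sum_neg_one_pow_mul_self_add_pow_expChar_pow {R : Type*} [CommRing R] (p : ℕ)
    [ExpChar R p] (x : R) (m : ℕ) :
    ∑ i ∈ Finset.range m, (-1) ^ i * (x + x ^ p) ^ p ^ i = x - (-1) ^ m * x ^ p ^ m := by
  have telescope := Finset.sum_range_sub' (fun i => (-1) ^ i * x ^ p ^ i) m
  simp only [pow_zero, one_mul, pow_one] at telescope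
  rw [← telescope]
  refine Finset.sum_congr rfl fun i _ => ?_
  rw [self_add_pow_expChar_pow_expChar_pow]
  ring

lemma Finset.sum_range_pow_eq_of_forall_ne_pow {M : Type*} [AddCommMonoid M] {p : ℕ}
    (hp : 1 < p) {F : ℕ → M} (hF : ∀ n, (∀ i, n ≠ p ^ i) → F n = 0) (m : ℕ) :
    ∑ n ∈ Finset.range (p ^ m), F n = ∑ i ∈ Finset.range m, F (p ^ i) := by
  rw [← Finset.sum_image fun i _ j _ h => Nat.pow_right_injective hp h]
  refine (Finset.sum_subset ?_ fun n hn hn' => hF n ?_).symm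
  · intro n hn
    obtain ⟨i, hi, rfl⟩ := Finset.mem_image.mp hn
    exact Finset.mem_range.mpr (Nat.pow_lt_pow_right hp (Finset.mem_range.mp hi))
  · rintro i rfl
    refine hn' (Finset.mem_image.mpr ⟨i, Finset.mem_range.mpr ?_, rfl⟩)
    exact (Nat.pow_lt_pow_iff_right hp).mp (Finset.mem_range.mp hn)

namespace PowerSeries

variable {R : Type*} [CommRing R]

instance {p : ℕ} [CharP R p] : CharP R⟦X⟧ p :=
  charP_of_injective_ringHom C_injective p

lemma coeff_pow_eq_zero_of_lt {f : R⟦X⟧} (hf : constantCoeff f = 0) {k n : ℕ} (hkn : k < n) :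
    coeff k (f ^ n) = 0 :=
  X_pow_dvd_iff.mp (pow_dvd_pow_of_dvd (X_dvd_iff.mpr hf) n) k hkn

lemma coeff_psComp_eq_coeff_sum {g f : R⟦X⟧} (hf : constantCoeff f = 0) {k N : ℕ}
    (hkN : k < N) :
    coeff k (psComp g f) = coeff k (∑ n ∈ Finset.range N, C (coeff n g) * f ^ n) := by
  rw [psComp, coeff_mk, ← Finset.sum_range_add_sum_Ico _ hkN, map_add, left_eq_add, map_sum]
  refine Finset.sum_eq_zero fun n hn => ?_
  rw [coeff_C_mul, coeff_pow_eq_zero_of_lt hf (Finset.mem_Ico.mp hn).1, mul_zero]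

lemma coeff_X_mul_Rseries_pow {p : ℕ} (hp : 1 < p) (i : ℕ) :
    coeff (p ^ i) (X * Rseries p) = (-1) ^ i := by
  classical
  obtain ⟨m, hm⟩ : ∃ m, p ^ i = m + 1 := Nat.exists_eq_add_one.mpr (Nat.pow_pos (by omega))
  have hex : ∃ j, m + 1 = p ^ j := ⟨i, hm.symm⟩
  rw [hm, coeff_succ_X_mul, Rseries, coeff_mk, dif_pos hex,
    Nat.pow_right_injective hp (hex.choose_spec.symm.trans hm.symm)]

lemma coeff_X_mul_Rseries_eq_zero {p n : ℕ} (hn : ∀ i, n ≠ p ^ i) :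
    coeff n (X * Rseries p) = 0 := by
  classical
  cases n with
  | zero => simp
  | succ m =>
    rw [coeff_succ_X_mul, Rseries, coeff_mk, dif_neg]
    exact fun ⟨i, hi⟩ => hn i hi

lemma X_mul_Wseries {p : ℕ} (hp : 1 ≤ p) : (X : (ZMod p)⟦X⟧) * Wseries p = X + X ^ p := by
  rw [Wseries, mul_add, mul_one, ← pow_succ', Nat.sub_add_cancel hp]

end PowerSeries

/-- Over `ℤ/p`, `x·R(x)` is a left inverse of `x·W(x)` for composition of power series:
`(x·R(x)) ∘ (x·W(x)) = x`. -/
theorem stmt_16 (p : ℕ) (hp : p.Prime) :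
    psComp (PowerSeries.X * Rseries p) (PowerSeries.X * Wseries p)
      = (PowerSeries.X : PowerSeries (ZMod p)) := by
  have := Fact.mk hp
  ext k
  have hk : k < p ^ k := Nat.lt_pow_self hp.one_lt
  calc coeff k (psComp (X * Rseries p) (X * Wseries p))
      = coeff k (∑ n ∈ Finset.range (p ^ k), C (coeff n (X * Rseries p)) * (X + X ^ p) ^ n) := by
        rw [X_mul_Wseries hp.one_le]
        exact coeff_psComp_eq_coeff_sum (by simp [hp.ne_zero]) hk
    _ = coeff k (∑ i ∈ Finset.range k, (-1) ^ i * (X + X ^ p) ^ p ^ i) := by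
        rw [Finset.sum_range_pow_eq_of_forall_ne_pow hp.one_lt
          (fun n hn => by rw [coeff_X_mul_Rseries_eq_zero hn, map_zero, zero_mul])]
        simp only [coeff_X_mul_Rseries_pow hp.one_lt, map_pow, map_neg, map_one]
    _ = coeff k X := by
        rw [sum_neg_one_pow_mul_self_add_pow_expChar_pow, map_sub, sub_eq_self, mul_comm,
          coeff_X_pow_mul', if_neg hk.not_ge]
end
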